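/- arXiv:1912.11924 — 6 statements merged into one kernel-verified Lean document; each statement's English description precedes it below -/
import Mathlib

section
/- Let d ∈ {2,3}, let ρ > 0 and a > 0 be real numbers, and let v, H ∈ ℝ^d. Then the (2d+2)×(2d+2) real matrix A₀(U) is symmetric positive definite, and for each i = 1,…,d the matrix A_i(U) is symmetric. -/
/-!
Writing `x = (p, u, b, s)`, the quadratic form of `A₀` is
`(p - H ⬝ b)² / (ρ a²) + ρ |u|² + |b|² + s²`, i.e. `A₀ = Eᵀ D E` with `D` the positive diagonal
matrix `diag(1/(ρa²), ρ I, I, 1)` and `E` the shear `(p, u, b, s) ↦ (p - H ⬝ b, u, b, s)`, which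
is invertible with inverse the shear for `-H`. Hence `A₀` is positive definite.
-/

open Matrix

/-- Index type for the `(2d+2) × (2d+2)` matrices of the symmetrized ideal compressible MHD
system, with blocks of sizes `1, d, d, 1` (total pressure, velocity, magnetic field, entropy). -/
abbrev MHDIdx (d : ℕ) := Unit ⊕ Fin d ⊕ Fin d ⊕ Unit

/-- The matrix `A₀(U)` of the symmetrized ideal compressible MHD system. -/
noncomputable def mhdA0 (d : ℕ) (ρ a : ℝ) (H : Fin d → ℝ) :
    Matrix (MHDIdx d) (MHDIdx d) ℝ :=
  Matrix.of fun p q =>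
    match p, q with
    | Sum.inl _, Sum.inl _ => 1 / (ρ * a ^ 2)
    | Sum.inl _, Sum.inr (Sum.inr (Sum.inl j)) => -H j / (ρ * a ^ 2)
    | Sum.inr (Sum.inl i), Sum.inr (Sum.inl j) => ρ * (if i = j then 1 else 0)
    | Sum.inr (Sum.inr (Sum.inl i)), Sum.inl _ => -H i / (ρ * a ^ 2)
    | Sum.inr (Sum.inr (Sum.inl i)), Sum.inr (Sum.inr (Sum.inl j)) =>
        (if i = j then 1 else 0) + H i * H j / (ρ * a ^ 2)
    | Sum.inr (Sum.inr (Sum.inr _)), Sum.inr (Sum.inr (Sum.inr _)) => 1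
    | _, _ => 0

/-- The matrix `A_i(U)`, `i = 1, …, d`, of the symmetrized ideal compressible MHD system. -/
noncomputable def mhdAi (d : ℕ) (ρ a : ℝ) (v H : Fin d → ℝ) (i : Fin d) :
    Matrix (MHDIdx d) (MHDIdx d) ℝ :=
  Matrix.of fun p q =>
    match p, q with
    | Sum.inl _, Sum.inl _ => v i / (ρ * a ^ 2)
    | Sum.inl _, Sum.inr (Sum.inl j) => if i = j then 1 else 0
    | Sum.inl _, Sum.inr (Sum.inr (Sum.inl j)) => -(v i * H j) / (ρ * a ^ 2)
    | Sum.inr (Sum.inl j), Sum.inl _ => if j = i then 1 else 0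
    | Sum.inr (Sum.inl j), Sum.inr (Sum.inl k) => ρ * v i * (if j = k then 1 else 0)
    | Sum.inr (Sum.inl j), Sum.inr (Sum.inr (Sum.inl k)) => -H i * (if j = k then 1 else 0)
    | Sum.inr (Sum.inr (Sum.inl j)), Sum.inl _ => -(v i * H j) / (ρ * a ^ 2)
    | Sum.inr (Sum.inr (Sum.inl j)), Sum.inr (Sum.inl k) => -H i * (if j = k then 1 else 0)
    | Sum.inr (Sum.inr (Sum.inl j)), Sum.inr (Sum.inr (Sum.inl k)) =>
        v i * (if j = k then 1 else 0) + v i * H j * H k / (ρ * a ^ 2)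
    | Sum.inr (Sum.inr (Sum.inr _)), Sum.inr (Sum.inr (Sum.inr _)) => v i
    | _, _ => 0

def mhdShear (d : ℕ) (H : Fin d → ℝ) : Matrix (MHDIdx d) (MHDIdx d) ℝ :=
  Matrix.of fun p q =>
    match p, q with
    | Sum.inl _, Sum.inl _ => 1
    | Sum.inl _, Sum.inr (Sum.inr (Sum.inl j)) => -H j
    | Sum.inr (Sum.inl i), Sum.inr (Sum.inl j) => if i = j then 1 else 0
    | Sum.inr (Sum.inr (Sum.inl i)), Sum.inr (Sum.inr (Sum.inl j)) => if i = j then 1 else 0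
    | Sum.inr (Sum.inr (Sum.inr _)), Sum.inr (Sum.inr (Sum.inr _)) => 1
    | _, _ => 0

noncomputable def mhdWeight (d : ℕ) (ρ a : ℝ) : MHDIdx d → ℝ
  | Sum.inl _ => 1 / (ρ * a ^ 2)
  | Sum.inr (Sum.inl _) => ρ
  | Sum.inr (Sum.inr _) => 1

theorem mhdA0_eq_transpose_mul_diagonal_mul (d : ℕ) (ρ a : ℝ) (H : Fin d → ℝ) :
    mhdA0 d ρ a H = (mhdShear d H)ᵀ * diagonal (mhdWeight d ρ a) * mhdShear d H := by
  ext p q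
  rcases p with _ | p | p | _ <;> rcases q with _ | q | q | _ <;>
    simp [mhdA0, mhdShear, mhdWeight, mul_apply, Fintype.sum_sum_type, diagonal_apply, eq_comm] <;>
    ring

theorem mhdShear_neg_mul_mhdShear (d : ℕ) (H : Fin d → ℝ) :
    mhdShear d (-H) * mhdShear d H = 1 := by
  ext p q
  rcases p with _ | p | p | _ <;> rcases q with _ | q | q | _ <;>
    simp [mhdShear, mul_apply, Fintype.sum_sum_type, one_apply]

theorem mhdWeight_pos {d : ℕ} {ρ a : ℝ} (hρ : 0 < ρ) (ha : a ≠ 0) (p : MHDIdx d) :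
    0 < mhdWeight d ρ a p := by
  rcases p with _ | _ | _ <;> simp only [mhdWeight] <;> positivity

theorem mhdShear_mulVec_injective (d : ℕ) (H : Fin d → ℝ) :
    Function.Injective (mhdShear d H).mulVec :=
  Function.LeftInverse.injective (g := (mhdShear d (-H)).mulVec) fun x => by
    rw [mulVec_mulVec, mhdShear_neg_mul_mhdShear, one_mulVec]

theorem mhdA0_posDef (d : ℕ) {ρ a : ℝ} (hρ : 0 < ρ) (ha : a ≠ 0) (H : Fin d → ℝ) :
    (mhdA0 d ρ a H).PosDef := by
  rw [mhdA0_eq_transpose_mul_diagonal_mul, ← conjTranspose_eq_transpose_of_trivial]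
  exact (posDef_diagonal_iff.mpr (mhdWeight_pos hρ ha)).conjTranspose_mul_mul_same
    (mhdShear_mulVec_injective d H)

theorem mhdAi_isSymm (d : ℕ) (ρ a : ℝ) (v H : Fin d → ℝ) (i : Fin d) :
    (mhdAi d ρ a v H i).IsSymm := by
  refine IsSymm.ext fun p q => ?_
  rcases p with _ | p | p | _ <;> rcases q with _ | q | q | _ <;>
    simp [mhdAi, eq_comm]; ring

theorem stmt0_general (d : ℕ) (ρ a : ℝ) (hρ : 0 < ρ) (ha : 0 < a)
    (v H : Fin d → ℝ) :
    (mhdA0 d ρ a H).IsSymm ∧ (mhdA0 d ρ a H).PosDef ∧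
      ∀ i : Fin d, (mhdAi d ρ a v H i).IsSymm := by
  have hA0 := mhdA0_posDef d hρ ha.ne' H
  exact ⟨isHermitian_iff_isSymm.mp hA0.isHermitian, hA0, mhdAi_isSymm d ρ a v H⟩

/-- `A₀(U)` is symmetric positive definite and each `A_i(U)` is symmetric. -/
theorem stmt0 (d : ℕ) (hd : d = 2 ∨ d = 3) (ρ a : ℝ) (hρ : 0 < ρ) (ha : 0 < a)
    (v H : Fin d → ℝ) :
    (mhdA0 d ρ a H).IsSymm ∧ (mhdA0 d ρ a H).PosDef ∧
      ∀ i : Fin d, (mhdAi d ρ a v H i).IsSymm :=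
  stmt0_general d ρ a hρ ha v H
end

section
/- Let d ∈ {2,3}, let ρ > 0, a > 0, let v, H, N ∈ ℝ^d, and suppose H·N = 0. Set s := v·N. Then s·A₀(U) − Σ_{i=1}^d N_i A_i(U) equals the (2d+2)×(2d+2) matrix whose only nonzero entries are the block −Nᵀ in the first row (columns 2,…,d+1) and the block −N in the first column (rows 2,…,d+1); i.e., in block form it equals [[0, −Nᵀ, 0, 0], [−N, O_d, O_d, 0], [0, O_d, O_d, 0], [0, 0, 0, 0]]. In particular, the boundary matrix of the plasma–vacuum free boundary problem is singular (the free boundary is characteristic). -/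
open Matrix

/-- The boundary matrix `[[0, −Nᵀ, 0, 0], [−N, O_d, O_d, 0], [0, O_d, O_d, 0], [0, 0, 0, 0]]`. -/
noncomputable def mhdBdry (d : ℕ) (N : Fin d → ℝ) : Matrix (MHDIdx d) (MHDIdx d) ℝ :=
  Matrix.of fun p q =>
    match p, q with
    | Sum.inl _, Sum.inr (Sum.inl j) => -N j
    | Sum.inr (Sum.inl i), Sum.inl _ => -N i
    | _, _ => 0

/-- With `s = v·N` and `H·N = 0`, the boundary matrix `s A₀(U) − Σᵢ Nᵢ Aᵢ(U)` equals
`[[0, −Nᵀ, 0, 0], [−N, O_d, O_d, 0], [0, O_d, O_d, 0], [0, 0, 0, 0]]`; in particular it is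
singular (the free boundary is characteristic). -/
theorem stmt1 (d : ℕ) (hd : d = 2 ∨ d = 3) (ρ a : ℝ) (hρ : 0 < ρ) (ha : 0 < a)
    (v H N : Fin d → ℝ) (hHN : ∑ i, H i * N i = 0) :
    (∑ i, v i * N i) • mhdA0 d ρ a H - ∑ i, N i • mhdAi d ρ a v H i = mhdBdry d N ∧
    ((∑ i, v i * N i) • mhdA0 d ρ a H - ∑ i, N i • mhdAi d ρ a v H i).det = 0 := by
  have hEq : (∑ i, v i * N i) • mhdA0 d ρ a H - ∑ i, N i • mhdAi d ρ a v H i = mhdBdry d N := by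
    ext p q
    rcases p with _ | j | j | _ <;> rcases q with _ | k | k | _ <;>
      simp only [mhdA0, mhdAi, mhdBdry, Matrix.sub_apply, Matrix.smul_apply, Matrix.sum_apply,
        Matrix.of_apply, smul_eq_mul, mul_zero, zero_mul, sub_zero, zero_sub, mul_one] <;>
      first
      | (simp [mul_comm]; done)
      | (by_cases h : j = k <;> simp [h] <;> simpa [mul_comm] using hHN)
      | (rw [Finset.sum_mul, ← Finset.sum_sub_distrib]
         exact Finset.sum_eq_zero fun i _ => by ring)
  refine ⟨hEq, ?_⟩
  rw [hEq]
  apply Matrix.det_eq_zero_of_row_eq_zero (Sum.inr (Sum.inr (Sum.inr ())))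
  intro q
  rcases q with _ | k | k | _ <;> simp [mhdBdry]
end

section
/- Let d ∈ {2,3}, ε ≥ 0, and u, v, H ∈ ℝ^d with ε²|v|² < 1; set Γ := (1 − ε²|v|²)^{−1/2}. Then |u|²|H|² − ε²(1 + Γ⁻²)(v·u)²|H|² − ε⁴(v·u)²(v·H)² − (u·H)² + 2ε²(v·H)(v·u)(H·u) ≥ 0. Equivalently, |u|²|H|² − ε²(1 + Γ⁻²)(v·u)²|H|² − (H·(ε²(v·u)v − u))² ≥ 0. -/
/-- The inequality `𝒯₆ ≥ 0` from the proof of positive definiteness of the relativistic MHD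
symmetrizer, in both of its equivalent forms. Here `Γ = (1 − ε²|v|²)^{−1/2}`. -/
theorem stmt9 (d : ℕ) (hd : d = 2 ∨ d = 3) (ε : ℝ) (hε : 0 ≤ ε)
    (u v H : Fin d → ℝ) (hv : ε ^ 2 * ∑ i, v i ^ 2 < 1)
    (Γ : ℝ) (hΓ : Γ = (Real.sqrt (1 - ε ^ 2 * ∑ i, v i ^ 2))⁻¹) :
    0 ≤ (∑ i, u i ^ 2) * (∑ i, H i ^ 2)
        - ε ^ 2 * (1 + Γ⁻¹ ^ 2) * (∑ i, v i * u i) ^ 2 * (∑ i, H i ^ 2)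
        - ε ^ 4 * (∑ i, v i * u i) ^ 2 * (∑ i, v i * H i) ^ 2
        - (∑ i, u i * H i) ^ 2
        + 2 * ε ^ 2 * (∑ i, v i * H i) * (∑ i, v i * u i) * (∑ i, H i * u i) ∧
    0 ≤ (∑ i, u i ^ 2) * (∑ i, H i ^ 2)
        - ε ^ 2 * (1 + Γ⁻¹ ^ 2) * (∑ i, v i * u i) ^ 2 * (∑ i, H i ^ 2)
        - (∑ i, H i * (ε ^ 2 * (∑ j, v j * u j) * v i - u i)) ^ 2 := by
  have hs : (0:ℝ) ≤ 1 - ε ^ 2 * ∑ i, v i ^ 2 := by linarith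
  have hΓ2 : Γ⁻¹ ^ 2 = 1 - ε ^ 2 * ∑ i, v i ^ 2 := by
    rw [hΓ, inv_inv, Real.sq_sqrt hs]
  set p : ℝ := ∑ i, v i * u i with hp
  set w : Fin d → ℝ := fun i => u i - ε ^ 2 * p * v i with hw
  have key : (∑ i, H i * w i) ^ 2 ≤ (∑ i, H i ^ 2) * (∑ i, w i ^ 2) :=
    Finset.sum_mul_sq_le_sq_mul_sq _ _ _
  have e1 : ∑ i, H i * w i = (∑ i, H i * u i) - ε ^ 2 * p * (∑ i, v i * H i) := by
    rw [Finset.mul_sum, ← Finset.sum_sub_distrib]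
    exact Finset.sum_congr rfl fun i _ => by simp [hw]; ring
  have e2 : ∑ i, w i ^ 2 = (∑ i, u i ^ 2) - 2 * ε ^ 2 * p * p
      + ε ^ 4 * p ^ 2 * (∑ i, v i ^ 2) := by
    have : ∀ i ∈ Finset.univ, w i ^ 2
        = u i ^ 2 - 2 * ε ^ 2 * p * (v i * u i) + ε ^ 4 * p ^ 2 * v i ^ 2 := by
      intro i _; simp only [hw]; ring
    rw [Finset.sum_congr rfl this, Finset.sum_add_distrib, Finset.sum_sub_distrib,
      ← Finset.mul_sum, ← Finset.mul_sum, ← hp]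
  have e3 : ∑ i, u i * H i = ∑ i, H i * u i :=
    Finset.sum_congr rfl fun i _ => mul_comm _ _
  have e4 : ∑ i, H i * (ε ^ 2 * p * v i - u i) = -(∑ i, H i * w i) := by
    rw [← Finset.sum_neg_distrib]
    exact Finset.sum_congr rfl fun i _ => by simp [hw]; ring
  rw [e1, e2] at key
  constructor
  · rw [e3, hΓ2]
    ring_nf at key ⊢
    linarith [key]
  · rw [e4, e1, hΓ2]
    ring_nf at key ⊢
    linarith [key]
end

section
/- Let d ∈ {2,3}, let ρ > 0, h > 0, a > 0, ε > 0 satisfy ε²a² ≤ h (i.e., the relativistic sound speed c_s := a/√h satisfies c_s ≤ ε⁻¹), and let v ∈ ℝ^d with ε²|v|² < 1; set Γ := (1 − ε²|v|²)^{−1/2}. Then for every u ∈ ℝ^d: ρhΓ|u|² − (ε²ρhΓ + ε⁴ρa²Γ⁻¹)(v·u)² ≥ ρhΓ⁻³|u|². -/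
/-!
Write `g = Γ⁻¹ = √(1 - ε²|v|²)`. After multiplying by `g`, Cauchy–Schwarz `(v·u)² ≤ |v|²|u|²`
bounds the right-hand side below by `ρ|u|² g² (h - ε⁴a²|v|²)`, while the left-hand side is
`ρ|u|² g² (h - ε²h|v|²)`; the difference is `ρ|u|² g² ε²|v|² (h - ε²a²) ≥ 0`, which is exactly
where the subluminal condition `ε²a² ≤ h` enters.
-/

theorem T5_lower_bound_of_sq_le {ρ h a ε s U P g : ℝ} (hρ : 0 ≤ ρ) (hh : 0 ≤ h)
    (hsub : ε ^ 2 * a ^ 2 ≤ h) (hs : 0 ≤ s) (hU : 0 ≤ U) (hP : P ≤ s * U)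
    (hg : 0 < g) (hg2 : g ^ 2 = 1 - ε ^ 2 * s) :
    ρ * h * g ^ 3 * U ≤ ρ * h * g⁻¹ * U - (ε ^ 2 * ρ * h * g⁻¹ + ε ^ 4 * ρ * a ^ 2 * g) * P := by
  have cleared : ρ * h * g ^ 4 * U ≤ ρ * h * U - (ε ^ 2 * ρ * h + ε ^ 4 * ρ * a ^ 2 * g ^ 2) * P :=
    calc ρ * h * g ^ 4 * U
        ≤ ρ * h * g ^ 4 * U + ρ * U * g ^ 2 * (ε ^ 2 * s) * (h - ε ^ 2 * a ^ 2) :=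
          le_add_of_nonneg_right (mul_nonneg (by positivity) (sub_nonneg.2 hsub))
      _ = ρ * h * U - (ε ^ 2 * ρ * h + ε ^ 4 * ρ * a ^ 2 * g ^ 2) * (s * U) := by
          have : g ^ 4 = (1 - ε ^ 2 * s) ^ 2 := by rw [← hg2]; ring
          rw [this, hg2]; ring
      _ ≤ ρ * h * U - (ε ^ 2 * ρ * h + ε ^ 4 * ρ * a ^ 2 * g ^ 2) * P := by gcongr
  have factor : ρ * h * g⁻¹ * U - (ε ^ 2 * ρ * h * g⁻¹ + ε ^ 4 * ρ * a ^ 2 * g) * P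
      = (ρ * h * U - (ε ^ 2 * ρ * h + ε ^ 4 * ρ * a ^ 2 * g ^ 2) * P) / g := by
    field_simp
  rw [factor, le_div_iff₀ hg]
  linarith

theorem stmt10_general (d : ℕ) (ρ h a ε : ℝ)
    (hρ : 0 < ρ) (hh : 0 < h) (hsub : ε ^ 2 * a ^ 2 ≤ h)
    (v : Fin d → ℝ) (hv : ε ^ 2 * ∑ i, v i ^ 2 < 1)
    (Γ : ℝ) (hΓ : Γ = (Real.sqrt (1 - ε ^ 2 * ∑ i, v i ^ 2))⁻¹)
    (u : Fin d → ℝ) :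
    ρ * h * Γ⁻¹ ^ 3 * ∑ i, u i ^ 2 ≤
      ρ * h * Γ * (∑ i, u i ^ 2)
        - (ε ^ 2 * ρ * h * Γ + ε ^ 4 * ρ * a ^ 2 * Γ⁻¹) * (∑ i, v i * u i) ^ 2 := by
  have hgap : 0 < 1 - ε ^ 2 * ∑ i, v i ^ 2 := sub_pos.2 hv
  subst hΓ
  rw [inv_inv]
  exact T5_lower_bound_of_sq_le hρ.le hh.le hsub (by positivity) (by positivity)
    (Finset.sum_mul_sq_le_sq_mul_sq _ _ _) (Real.sqrt_pos.2 hgap) (Real.sq_sqrt hgap.le)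

/-- The lower bound `𝒯₅ ≥ ρhΓ⁻³|u|²` from the proof of positive definiteness of the
relativistic MHD symmetrizer, under the subluminal sound speed condition `ε²a² ≤ h`.
Here `Γ = (1 − ε²|v|²)^{−1/2}`. -/
theorem stmt10 (d : ℕ) (hd : d = 2 ∨ d = 3) (ρ h a ε : ℝ)
    (hρ : 0 < ρ) (hh : 0 < h) (ha : 0 < a) (hε : 0 < ε) (hsub : ε ^ 2 * a ^ 2 ≤ h)
    (v : Fin d → ℝ) (hv : ε ^ 2 * ∑ i, v i ^ 2 < 1)
    (Γ : ℝ) (hΓ : Γ = (Real.sqrt (1 - ε ^ 2 * ∑ i, v i ^ 2))⁻¹)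
    (u : Fin d → ℝ) :
    ρ * h * Γ⁻¹ ^ 3 * ∑ i, u i ^ 2 ≤
      ρ * h * Γ * (∑ i, u i ^ 2)
        - (ε ^ 2 * ρ * h * Γ + ε ^ 4 * ρ * a ^ 2 * Γ⁻¹) * (∑ i, v i * u i) ^ 2 :=
  stmt10_general d ρ h a ε hρ hh hsub v hv Γ hΓ u
end

section
/- Let d ∈ {2,3}, ρ > 0, h > 0, a > 0, ε > 0 with ε²a² < h, and let v, H ∈ ℝ^d with ε²|v|² < 1; set Γ := (1 − ε²|v|²)^{−1/2} and |b|² := ε²Γ⁻²|H|² + ε⁴(v·H)². Then the symmetric d×d matrix 𝒜₀ − ε⁴(ρa²/Γ) v⊗v is positive definite, where 𝒜₀ := (ρhΓ + ε²Γ⁻¹|H|²)(I_d − ε²v⊗v) − ε²Γ⁻¹|b|² v⊗v − ε²Γ⁻¹ H⊗H + ε⁴Γ⁻¹(v·H)(H⊗v + v⊗H). -/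
open Matrix

/-- The Lorentz factor `Γ = (1 − ε²|v|²)^{−1/2}`. -/
noncomputable def lorentz (d : ℕ) (ε : ℝ) (v : Fin d → ℝ) : ℝ :=
  (Real.sqrt (1 - ε ^ 2 * ∑ i, v i ^ 2))⁻¹

/-- `|b|² = ε²Γ⁻²|H|² + ε⁴(v·H)²`, the Minkowski norm squared of the magnetic field
`d`-vector. -/
noncomputable def bsq (d : ℕ) (ε : ℝ) (v H : Fin d → ℝ) : ℝ :=
  ε ^ 2 * (lorentz d ε v)⁻¹ ^ 2 * (∑ i, H i ^ 2) + ε ^ 4 * (∑ i, v i * H i) ^ 2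

/-- `M₀ = Γ⁻¹(I_d + ε²Γ² v⊗v)`. -/
noncomputable def M0rel (d : ℕ) (ε : ℝ) (v : Fin d → ℝ) : Matrix (Fin d) (Fin d) ℝ :=
  (lorentz d ε v)⁻¹ • ((1 : Matrix (Fin d) (Fin d) ℝ)
    + (ε ^ 2 * lorentz d ε v ^ 2) • vecMulVec v v)

/-- `𝒜₀`, the velocity block of the relativistic MHD symmetrizer `B₀(V)`. -/
noncomputable def calA0 (d : ℕ) (ε ρ h : ℝ) (v H : Fin d → ℝ) :
    Matrix (Fin d) (Fin d) ℝ :=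
  (ρ * h * lorentz d ε v + ε ^ 2 * (lorentz d ε v)⁻¹ * ∑ i, H i ^ 2) •
      ((1 : Matrix (Fin d) (Fin d) ℝ) - ε ^ 2 • vecMulVec v v)
    - (ε ^ 2 * (lorentz d ε v)⁻¹ * bsq d ε v H) • vecMulVec v v
    - (ε ^ 2 * (lorentz d ε v)⁻¹) • vecMulVec H H
    + (ε ^ 4 * (lorentz d ε v)⁻¹ * ∑ i, v i * H i) • (vecMulVec H v + vecMulVec v H)

/-- `𝒜ᵢ`, the velocity block of `Bᵢ(V)`, `i = 1, …, d`. -/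
noncomputable def calAi (d : ℕ) (ε ρ h : ℝ) (v H : Fin d → ℝ) (i : Fin d) :
    Matrix (Fin d) (Fin d) ℝ :=
  v i • ((ρ * h * lorentz d ε v + ε ^ 2 * (lorentz d ε v)⁻¹ * ∑ j, H j ^ 2) •
        ((1 : Matrix (Fin d) (Fin d) ℝ) - ε ^ 2 • vecMulVec v v)
      + (ε ^ 2 * (lorentz d ε v)⁻¹) • (bsq d ε v H • vecMulVec v v - vecMulVec H H))
    + (ε ^ 2 * (lorentz d ε v)⁻¹ * H i) •
        (((lorentz d ε v)⁻¹ ^ 2) • (vecMulVec H v + vecMulVec v H)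
          - (2 * ∑ j, v j * H j) •
              ((1 : Matrix (Fin d) (Fin d) ℝ) - ε ^ 2 • vecMulVec v v))
    + (lorentz d ε v)⁻¹ •
        vecMulVec ((ε ^ 2 * ∑ j, v j * H j) • H - bsq d ε v H • v) (Pi.single i 1)
    + (lorentz d ε v)⁻¹ •
        vecMulVec (Pi.single i 1) ((ε ^ 2 * ∑ j, v j * H j) • H - bsq d ε v H • v)

/-- `𝒩ᵢ = (Γ⁻²H + ε²(v·H)v)⊗(eᵢ − ε²vᵢv) − Γ⁻²Hᵢ I_d`. -/
noncomputable def calNi (d : ℕ) (ε : ℝ) (v H : Fin d → ℝ) (i : Fin d) :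
    Matrix (Fin d) (Fin d) ℝ :=
  vecMulVec (((lorentz d ε v)⁻¹ ^ 2) • H + (ε ^ 2 * ∑ j, v j * H j) • v)
      (Pi.single i 1 - (ε ^ 2 * v i) • v)
    - ((lorentz d ε v)⁻¹ ^ 2 * H i) • (1 : Matrix (Fin d) (Fin d) ℝ)

/-- Index type for the `(2d+2) × (2d+2)` matrices of the symmetrized ideal relativistic MHD
system, blocks of sizes `1, d, d, 1`. -/
abbrev RMHDIdx (d : ℕ) := Unit ⊕ Fin d ⊕ Fin d ⊕ Unit

/-- The symmetrizer `B₀(V)` of ideal relativistic MHD. -/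
noncomputable def B0mat (d : ℕ) (ε ρ h a : ℝ) (v H : Fin d → ℝ) :
    Matrix (RMHDIdx d) (RMHDIdx d) ℝ :=
  Matrix.of fun p q =>
    match p, q with
    | Sum.inl _, Sum.inl _ => lorentz d ε v / (ρ * a ^ 2)
    | Sum.inl _, Sum.inr (Sum.inl j) => ε ^ 2 * v j
    | Sum.inr (Sum.inl i), Sum.inl _ => ε ^ 2 * v i
    | Sum.inr (Sum.inl i), Sum.inr (Sum.inl j) => calA0 d ε ρ h v H i j
    | Sum.inr (Sum.inr (Sum.inl i)), Sum.inr (Sum.inr (Sum.inl j)) => M0rel d ε v i j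
    | Sum.inr (Sum.inr (Sum.inr _)), Sum.inr (Sum.inr (Sum.inr _)) => 1
    | _, _ => 0

/-- The matrices `Bᵢ(V)`, `i = 1, …, d`, of the symmetrized ideal relativistic MHD system. -/
noncomputable def Bimat (d : ℕ) (ε ρ h a : ℝ) (v H : Fin d → ℝ) (i : Fin d) :
    Matrix (RMHDIdx d) (RMHDIdx d) ℝ :=
  Matrix.of fun p q =>
    match p, q with
    | Sum.inl _, Sum.inl _ => lorentz d ε v * v i / (ρ * a ^ 2)
    | Sum.inl _, Sum.inr (Sum.inl j) => if i = j then 1 else 0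
    | Sum.inr (Sum.inl j), Sum.inl _ => if i = j then 1 else 0
    | Sum.inr (Sum.inl j), Sum.inr (Sum.inl k) => calAi d ε ρ h v H i j k
    | Sum.inr (Sum.inl j), Sum.inr (Sum.inr (Sum.inl k)) => calNi d ε v H i k j
    | Sum.inr (Sum.inr (Sum.inl j)), Sum.inr (Sum.inl k) => calNi d ε v H i j k
    | Sum.inr (Sum.inr (Sum.inl j)), Sum.inr (Sum.inr (Sum.inl k)) => v i * M0rel d ε v j k
    | Sum.inr (Sum.inr (Sum.inr _)), Sum.inr (Sum.inr (Sum.inr _)) => v i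
    | _, _ => 0

/-- The Jacobian `𝐉 = ∂V/∂U` of the change of unknowns `U = (q, v, H, S) ↦ V = (p, w, H, S)`
in ideal relativistic MHD, with `𝐚 = ε²(|H|²v − (v·H)H)` and `𝐛 = Γ⁻²H + ε²(v·H)v`. -/
noncomputable def Jac (d : ℕ) (ε : ℝ) (v H : Fin d → ℝ) :
    Matrix (RMHDIdx d) (RMHDIdx d) ℝ :=
  Matrix.of fun p q =>
    match p, q with
    | Sum.inl _, Sum.inl _ => 1
    | Sum.inl _, Sum.inr (Sum.inl j) =>
        ε ^ 2 * ((∑ k, H k ^ 2) * v j - (∑ k, v k * H k) * H j)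
    | Sum.inl _, Sum.inr (Sum.inr (Sum.inl j)) =>
        -((lorentz d ε v)⁻¹ ^ 2 * H j + ε ^ 2 * (∑ k, v k * H k) * v j)
    | Sum.inr (Sum.inl i), Sum.inr (Sum.inl j) => lorentz d ε v ^ 2 * M0rel d ε v i j
    | Sum.inr (Sum.inr (Sum.inl i)), Sum.inr (Sum.inr (Sum.inl j)) => if i = j then 1 else 0
    | Sum.inr (Sum.inr (Sum.inr _)), Sum.inr (Sum.inr (Sum.inr _)) => 1
    | _, _ => 0

/-! Since `Γ⁻² = 1 − ε²|v|²`, the quadratic form of `𝒜₀` at `x` splits, with `y = x − ε²(v·x)v`, as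
`ρhΓ(|x|² − ε²(v·x)²) + ε²Γ⁻¹(|H|²|y|² − (H·y)²)`. The magnetic part is nonnegative by
Cauchy–Schwarz. In the fluid part, `(v·x)² ≤ |v|²|x|²` gives `Γ(|x|² − ε²(v·x)²) ≥ Γ⁻¹|x|²` and
`ε²(v·x)² ≤ |x|²`, so after subtracting the `v⊗v` term the form is at least
`ρΓ⁻¹|x|²(h − ε²a²) > 0`. -/

lemma isHermitian_vecMulVec_self {n : Type*} (u : n → ℝ) : (vecMulVec u u).IsHermitian := by
  rw [IsHermitian, conjTranspose_vecMulVec, star_trivial]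

section DotProduct

variable {n : Type*} [Fintype n]

lemma dotProduct_vecMulVec_mulVec {R : Type*} [CommSemiring R] (a b x : n → R) :
    x ⬝ᵥ (vecMulVec a b *ᵥ x) = (a ⬝ᵥ x) * (b ⬝ᵥ x) := by
  rw [vecMulVec_mulVec, op_smul_eq_smul, dotProduct_smul, smul_eq_mul, dotProduct_comm x a,
    mul_comm]

lemma sum_mul_eq_dotProduct {R : Type*} [CommSemiring R] (u w : n → R) :
    ∑ i, u i * w i = u ⬝ᵥ w := rfl

lemma sum_sq_eq_dotProduct_self {R : Type*} [CommSemiring R] (u : n → R) :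
    ∑ i, u i ^ 2 = u ⬝ᵥ u := by
  simp only [sq, sum_mul_eq_dotProduct]

lemma sq_dotProduct_le (u w : n → ℝ) : (u ⬝ᵥ w) ^ 2 ≤ (u ⬝ᵥ u) * (w ⬝ᵥ w) := by
  simpa only [dotProduct, sq] using Finset.sum_mul_sq_le_sq_mul_sq Finset.univ u w

end DotProduct

section Lorentz

variable {d : ℕ} {ε : ℝ} {v : Fin d → ℝ}

lemma inv_lorentz_sq (hv : ε ^ 2 * ∑ i, v i ^ 2 < 1) :
    (lorentz d ε v)⁻¹ ^ 2 = 1 - ε ^ 2 * (v ⬝ᵥ v) := by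
  rw [lorentz, inv_inv, Real.sq_sqrt (by linarith), sum_sq_eq_dotProduct_self]

lemma inv_lorentz_pos (hv : ε ^ 2 * ∑ i, v i ^ 2 < 1) : 0 < (lorentz d ε v)⁻¹ := by
  rw [lorentz, inv_inv]
  exact Real.sqrt_pos.2 (by linarith)

end Lorentz

lemma isHermitian_calA0 (d : ℕ) (ε ρ h : ℝ) (v H : Fin d → ℝ) :
    (calA0 d ε ρ h v H).IsHermitian := by
  have hsymm : (vecMulVec H v + vecMulVec v H).IsHermitian := by
    rw [IsHermitian, conjTranspose_add, conjTranspose_vecMulVec, conjTranspose_vecMulVec,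
      star_trivial, star_trivial, add_comm]
  have hvv := isHermitian_vecMulVec_self v
  unfold calA0
  exact ((((isHermitian_one.sub (hvv.smul (.all _))).smul (.all _)).sub (hvv.smul (.all _))).sub
    ((isHermitian_vecMulVec_self H).smul (.all _))).add (hsymm.smul (.all _))

lemma dotProduct_calA0_mulVec {d : ℕ} {ε : ℝ} {v : Fin d → ℝ} (ρ h : ℝ) (H x y : Fin d → ℝ)
    (hv : ε ^ 2 * ∑ i, v i ^ 2 < 1) (hy : y = x - (ε ^ 2 * (v ⬝ᵥ x)) • v) :
    x ⬝ᵥ (calA0 d ε ρ h v H *ᵥ x) =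
      ρ * h * lorentz d ε v * (x ⬝ᵥ x - ε ^ 2 * (v ⬝ᵥ x) ^ 2)
        + ε ^ 2 * (lorentz d ε v)⁻¹ * ((H ⬝ᵥ H) * (y ⬝ᵥ y) - (H ⬝ᵥ y) ^ 2) := by
  have hg2 := inv_lorentz_sq hv
  subst hy
  simp only [calA0, bsq, sub_mulVec, add_mulVec, smul_mulVec, one_mulVec, dotProduct_sub,
    dotProduct_add, sub_dotProduct, dotProduct_smul, smul_dotProduct, smul_eq_mul,
    dotProduct_vecMulVec_mulVec, sum_sq_eq_dotProduct_self, sum_mul_eq_dotProduct, hg2]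
  simp only [dotProduct_comm x, dotProduct_comm H v]
  ring

lemma fluid_form_pos {d : ℕ} {ρ h a ε : ℝ} {v x : Fin d → ℝ} (hρ : 0 < ρ)
    (hsub : ε ^ 2 * a ^ 2 < h) (hv : ε ^ 2 * ∑ i, v i ^ 2 < 1) (hx : x ≠ 0) :
    0 < ρ * h * lorentz d ε v * (x ⬝ᵥ x - ε ^ 2 * (v ⬝ᵥ x) ^ 2)
      - ε ^ 4 * (ρ * a ^ 2 / lorentz d ε v) * (v ⬝ᵥ x) ^ 2 := by
  have hX : 0 < x ⬝ᵥ x := by simpa only [star_trivial] using dotProduct_self_star_pos_iff.2 hx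
  have hCS := sq_dotProduct_le v x
  have hg := inv_lorentz_pos hv
  have hg2 := inv_lorentz_sq hv
  rw [← inv_inv (lorentz d ε v), div_inv_eq_mul]
  set g := (lorentz d ε v)⁻¹
  set S := v ⬝ᵥ x
  have hΓ : g * (x ⬝ᵥ x) ≤ g⁻¹ * (x ⬝ᵥ x - ε ^ 2 * S ^ 2) := by
    rw [le_inv_mul_iff₀ hg]
    nlinarith [mul_le_mul_of_nonneg_left hCS (sq_nonneg ε)]
  have hS : ε ^ 2 * S ^ 2 ≤ x ⬝ᵥ x := by
    nlinarith [mul_le_mul_of_nonneg_left hCS (sq_nonneg ε), sq_nonneg g]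
  have hρh : 0 ≤ ρ * h := by nlinarith [sq_nonneg (ε * a)]
  calc 0 < ρ * g * (x ⬝ᵥ x) * (h - ε ^ 2 * a ^ 2) := by
        have := sub_pos.2 hsub
        positivity
    _ ≤ _ := by
        nlinarith [mul_le_mul_of_nonneg_left hΓ hρh,
          mul_le_mul_of_nonneg_left hS (by positivity : 0 ≤ ρ * a ^ 2 * g * ε ^ 2)]

theorem stmt11_general (d : ℕ) (ρ h a ε : ℝ)
    (hρ : 0 < ρ) (hsub : ε ^ 2 * a ^ 2 < h)
    (v H : Fin d → ℝ) (hv : ε ^ 2 * ∑ i, v i ^ 2 < 1) :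
    (calA0 d ε ρ h v H
      - (ε ^ 4 * (ρ * a ^ 2 / lorentz d ε v)) • vecMulVec v v).PosDef := by
  rw [posDef_iff_dotProduct_mulVec]
  refine ⟨(isHermitian_calA0 d ε ρ h v H).sub ((isHermitian_vecMulVec_self v).smul (.all _)),
    fun x hx => ?_⟩
  set y := x - (ε ^ 2 * (v ⬝ᵥ x)) • v with hy
  have hmag : 0 ≤ ε ^ 2 * (lorentz d ε v)⁻¹ * ((H ⬝ᵥ H) * (y ⬝ᵥ y) - (H ⬝ᵥ y) ^ 2) :=
    mul_nonneg (mul_nonneg (sq_nonneg ε) (inv_lorentz_pos hv).le)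
      (sub_nonneg.2 (sq_dotProduct_le H y))
  rw [star_trivial, sub_mulVec, dotProduct_sub, dotProduct_calA0_mulVec ρ h H x y hv hy,
    smul_mulVec, dotProduct_smul, dotProduct_vecMulVec_mulVec, smul_eq_mul, ← sq]
  linarith [fluid_form_pos hρ hsub hv hx]

/-- The matrix `𝒜₀ − ε⁴(ρa²/Γ) v⊗v` is (symmetric) positive definite under the subluminal
sound speed condition `ε²a² < h`. -/
theorem stmt11 (d : ℕ) (hd : d = 2 ∨ d = 3) (ρ h a ε : ℝ)
    (hρ : 0 < ρ) (hh : 0 < h) (ha : 0 < a) (hε : 0 < ε) (hsub : ε ^ 2 * a ^ 2 < h)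
    (v H : Fin d → ℝ) (hv : ε ^ 2 * ∑ i, v i ^ 2 < 1) :
    (calA0 d ε ρ h v H
      - (ε ^ 4 * (ρ * a ^ 2 / lorentz d ε v)) • vecMulVec v v).PosDef :=
  stmt11_general d ρ h a ε hρ hsub v H hv
end

section
/- Let d ∈ {2,3}, ε > 0, and v, H, N ∈ ℝ^d with ε²|v|² < 1; set Γ := (1 − ε²|v|²)^{−1/2}, M₀ := Γ⁻¹(I_d + ε²Γ²v⊗v), v_N := v·N, 𝐜 := N − ε²v_N v, 𝐚 := ε²(|H|²v − (v·H)H), and |b|² := ε²Γ⁻²|H|² + ε⁴(v·H)². Then: (1) ΓM₀𝐜 = N; and (2) M₀ Ã₁ M₀ = −Γ⁻³(N⊗𝐚 + 𝐚⊗N), where Ã₁ := ε²Γ⁻¹v_N{2|b|² v⊗v − ε²(v·H)(v⊗H + H⊗v)} + Γ⁻¹(ε²(v·H)H − |b|²v)⊗N + Γ⁻¹N⊗(ε²(v·H)H − |b|²v). -/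
open Matrix

lemma mul_vmv {d : ℕ} (A : Matrix (Fin d) (Fin d) ℝ) (x y : Fin d → ℝ) :
    A * vecMulVec x y = vecMulVec (A *ᵥ x) y := by
  ext i j
  simp only [Matrix.mul_apply, vecMulVec_apply, mulVec, dotProduct, Finset.sum_mul]
  exact Finset.sum_congr rfl fun k _ => by ring

lemma vmv_mul {d : ℕ} (A : Matrix (Fin d) (Fin d) ℝ) (x y : Fin d → ℝ) :
    vecMulVec x y * A = vecMulVec x (y ᵥ* A) := by
  ext i j
  simp only [Matrix.mul_apply, vecMulVec_apply, vecMul, dotProduct, Finset.mul_sum]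
  exact Finset.sum_congr rfl fun k _ => by ring

lemma vmv_mulVec {d : ℕ} (x y z : Fin d → ℝ) :
    vecMulVec x y *ᵥ z = (y ⬝ᵥ z) • x := by
  funext i
  simp only [vecMulVec_apply, mulVec, dotProduct, Pi.smul_apply, smul_eq_mul, Finset.mul_sum]
  rw [Finset.sum_mul]
  exact Finset.sum_congr rfl fun k _ => by ring

lemma vec_vmv_mul {d : ℕ} (x y z : Fin d → ℝ) :
    z ᵥ* vecMulVec x y = (z ⬝ᵥ x) • y := by
  funext i
  simp only [vecMulVec_apply, vecMul, dotProduct, Pi.smul_apply, smul_eq_mul, Finset.mul_sum]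
  rw [Finset.sum_mul]
  exact Finset.sum_congr rfl fun k _ => by ring

lemma M0_mulVec {d : ℕ} (ε : ℝ) (v z : Fin d → ℝ) :
    M0rel d ε v *ᵥ z = (lorentz d ε v)⁻¹ • z
      + ((lorentz d ε v)⁻¹ * (ε ^ 2 * lorentz d ε v ^ 2) * (v ⬝ᵥ z)) • v := by
  simp only [M0rel, Matrix.smul_mulVec, Matrix.add_mulVec, Matrix.one_mulVec,
    vmv_mulVec, smul_smul]
  rw [smul_add]
  simp [smul_smul, mul_comm, mul_left_comm, mul_assoc]

lemma M0_vecMul {d : ℕ} (ε : ℝ) (v z : Fin d → ℝ) :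
    z ᵥ* M0rel d ε v = (lorentz d ε v)⁻¹ • z
      + ((lorentz d ε v)⁻¹ * (ε ^ 2 * lorentz d ε v ^ 2) * (v ⬝ᵥ z)) • v := by
  have hT : (M0rel d ε v)ᵀ = M0rel d ε v := by
    simp only [M0rel, Matrix.transpose_smul, Matrix.transpose_add, Matrix.transpose_one]
    have h2 : (vecMulVec v v)ᵀ = vecMulVec v v := by
      ext i j; simp [vecMulVec_apply, mul_comm]
    rw [h2]
  rw [← hT, Matrix.vecMul_transpose, M0_mulVec]

lemma stmt14powred (w c : ℝ) (h : w ^ 2 = c) :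
    w ^ 3 = c * w ∧ w ^ 4 = c ^ 2 ∧ w ^ 5 = c ^ 2 * w ∧ w ^ 6 = c ^ 3 ∧ w ^ 7 = c ^ 3 * w ∧
    w ^ 8 = c ^ 4 ∧ w ^ 9 = c ^ 4 * w ∧ w ^ 10 = c ^ 5 ∧ w ^ 11 = c ^ 5 * w ∧
    w ^ 12 = c ^ 6 := by
  subst h
  exact ⟨by ring, by ring, by ring, by ring, by ring, by ring, by ring, by ring, by ring,
    by ring⟩

/-- The two matrix identities `ΓM₀𝐜 = N` and `M₀Ã₁M₀ = −Γ⁻³(N⊗𝐚 + 𝐚⊗N)` used to compute the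
boundary matrix of the relativistic plasma–vacuum problem, where `v_N = v·N`,
`𝐜 = N − ε²v_N v`, `𝐚 = ε²(|H|²v − (v·H)H)`, and `Ã₁` is as displayed. -/
theorem stmt14 (d : ℕ) (hd : d = 2 ∨ d = 3) (ε : ℝ) (hε : 0 < ε)
    (v H N : Fin d → ℝ) (hv : ε ^ 2 * ∑ i, v i ^ 2 < 1)
    (vN : ℝ) (hvN : vN = ∑ i, v i * N i)
    (c : Fin d → ℝ) (hc : ∀ i, c i = N i - ε ^ 2 * vN * v i)
    (avec : Fin d → ℝ)
    (havec : ∀ i, avec i = ε ^ 2 * ((∑ k, H k ^ 2) * v i - (∑ k, v k * H k) * H i))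
    (x : Fin d → ℝ) (hx : x = (ε ^ 2 * ∑ j, v j * H j) • H - bsq d ε v H • v)
    (Atil : Matrix (Fin d) (Fin d) ℝ)
    (hAtil : Atil =
      (ε ^ 2 * (lorentz d ε v)⁻¹ * vN) •
          ((2 * bsq d ε v H) • vecMulVec v v
            - (ε ^ 2 * ∑ j, v j * H j) • (vecMulVec v H + vecMulVec H v))
        + (lorentz d ε v)⁻¹ • vecMulVec x N + (lorentz d ε v)⁻¹ • vecMulVec N x) :
    lorentz d ε v • (M0rel d ε v *ᵥ c) = N ∧
    M0rel d ε v * Atil * M0rel d ε v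
      = (-((lorentz d ε v)⁻¹ ^ 3)) • (vecMulVec N avec + vecMulVec avec N) := by
  subst hvN hx hAtil
  have h0 : (0:ℝ) < 1 - ε ^ 2 * ∑ i, v i ^ 2 := by linarith
  have hw2' : Real.sqrt (1 - ε ^ 2 * ∑ i, v i ^ 2) ^ 2 = 1 - ε ^ 2 * ∑ i, v i ^ 2 :=
    Real.sq_sqrt h0.le
  have hw0 : (0:ℝ) < Real.sqrt (1 - ε ^ 2 * ∑ i, v i ^ 2) := Real.sqrt_pos.mpr h0
  have hL : lorentz d ε v = (Real.sqrt (1 - ε ^ 2 * ∑ i, v i ^ 2))⁻¹ := rfl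
  set w := Real.sqrt (1 - ε ^ 2 * ∑ i, v i ^ 2) with hwdef
  have hwne : w ≠ 0 := hw0.ne'
  have hA : (lorentz d ε v)⁻¹ = w := by rw [hL, inv_inv]
  -- scalar abbreviations
  set S := ∑ i, v i ^ 2 with hS
  set s := ∑ i, v i * H i with hs
  set h2 := ∑ i, H i ^ 2 with hh2
  set vN := ∑ i, v i * N i with hvN
  have hw2 : w ^ 2 = 1 - ε ^ 2 * S := hw2'
  obtain ⟨e3, e4, e5, e6, e7, e8, e9, e10, e11, e12⟩ := stmt14powred w _ hw2
  have dvv : v ⬝ᵥ v = S := by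
    simp [dotProduct, hS, sq]
  have dvH : v ⬝ᵥ H = s := rfl
  have dvN : v ⬝ᵥ N = vN := rfl
  have hb : bsq d ε v H = ε ^ 2 * w ^ 2 * h2 + ε ^ 4 * s ^ 2 := by
    rw [bsq, hA]
  constructor
  · have hcf : c = N - (ε ^ 2 * vN) • v := by
      funext i; rw [hc]; simp; try ring
    rw [hcf, M0_mulVec, hA, hL]
    funext i
    simp only [Pi.smul_apply, Pi.add_apply, Pi.sub_apply, dotProduct_sub, dotProduct_smul,
      dvv, dvN, smul_eq_mul]
    field_simp
    ring_nf
    try (simp only [e3, e4, e5, e6, e7, e8, e9, e10, e11, e12, hw2]; ring)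
  · have haf : avec = (ε ^ 2 * h2) • v - (ε ^ 2 * s) • H := by
      funext i; rw [havec]; simp; try ring
    simp only [Matrix.mul_add, Matrix.add_mul, Matrix.mul_sub, Matrix.sub_mul,
      Matrix.mul_smul, Matrix.smul_mul, mul_vmv, vmv_mul, M0_mulVec, M0_vecMul, haf]
    ext i j
    simp only [Pi.smul_apply, Pi.add_apply, Pi.sub_apply, Matrix.smul_apply,
      Matrix.add_apply, Matrix.sub_apply, vecMulVec_apply, smul_eq_mul,
      dotProduct_sub, dotProduct_smul, dotProduct_add, dvv, dvH, dvN, hb, hA, hL]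
    field_simp
    ring_nf
    simp only [e3, e4, e5, e6, e7, e8, e9, e10, e11, e12, hw2]
    ring
end
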